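/- Let z* be the unique dual optimal solution and y* the unique sketched dual optimal solution, and set Δ = y* − z*. Then ⟨A P_S Aᵀ Δ, Δ⟩ + (λ/μ)‖Δ‖₂² ≤ ⟨A P_S^⊥ Aᵀ z*, Δ⟩. -/

import Mathlib

open Matrix Finset Real Set

noncomputable section

namespace Sketch

/-- The ℓ2 norm of a vector in `Fin k → ℝ`. -/
def norm2 {k : ℕ} (x : Fin k → ℝ) : ℝ := Real.sqrt (∑ i, x i ^ 2)

/-- The continuous linear functional `v ↦ ⟨w, v⟩`; used to state that a function has
gradient `w` at a point. -/
def dotCLM {k : ℕ} (w : Fin k → ℝ) : (Fin k → ℝ) →L[ℝ] ℝ :=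
  LinearMap.toContinuousLinearMap
    { toFun := fun v => w ⬝ᵥ v
      map_add' := fun a b => dotProduct_add w a b
      map_smul' := fun c a => by
        simp [dotProduct, Finset.mul_sum, mul_left_comm] }

/-- The domain of the Fenchel conjugate `f*`. -/
def fenchelDom {k : ℕ} (f : (Fin k → ℝ) → ℝ) : Set (Fin k → ℝ) :=
  {z | BddAbove (Set.range fun w => w ⬝ᵥ z - f w)}

/-- The Fenchel conjugate `f*(z) = sup_w (⟨w, z⟩ - f(w))` (as a real-valued supremum,
meaningful on `fenchelDom f`). -/
def fenchel {k : ℕ} (f : (Fin k → ℝ) → ℝ) (z : Fin k → ℝ) : ℝ :=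
  ⨆ w, (w ⬝ᵥ z - f w)

/-- The subdifferential of the Fenchel conjugate `f*` at `z`. -/
def fenchelSubdiff {k : ℕ} (f : (Fin k → ℝ) → ℝ) (z : Fin k → ℝ) : Set (Fin k → ℝ) :=
  {g | ∀ y ∈ fenchelDom f, fenchel f z + g ⬝ᵥ (y - z) ≤ fenchel f y}

/-- `P` is the orthogonal projector onto the range (column space) of `S`. -/
def IsOrthProj {q m : ℕ} (S : Matrix (Fin q) (Fin m) ℝ) (P : Matrix (Fin q) (Fin q) ℝ) : Prop :=
  Pᵀ = P ∧ P * P = P ∧ P * S = S ∧ ∃ C : Matrix (Fin m) (Fin q) ℝ, P = S * C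

/-- The quantity `Z_f`: the supremum of `(Δᵀ B P⊥ Bᵀ Δ)^{1/2} / ‖Δ‖₂` over nonzero
`Δ ∈ dom f* - z*`. -/
def Zf {k q : ℕ} (f : (Fin k → ℝ) → ℝ) (B : Matrix (Fin k) (Fin q) ℝ)
    (Pperp : Matrix (Fin q) (Fin q) ℝ) (zs : Fin k → ℝ) : ℝ :=
  sSup {r | ∃ Δ : Fin k → ℝ, Δ ≠ 0 ∧ zs + Δ ∈ fenchelDom f ∧
    r = Real.sqrt (Δ ⬝ᵥ (B * Pperp * Bᵀ).mulVec Δ) / norm2 Δ}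

/-- The spectral norm (largest singular value) of a matrix. -/
def specNorm {a b : ℕ} (M : Matrix (Fin a) (Fin b) ℝ) : ℝ :=
  sSup {r | ∃ v : Fin b → ℝ, norm2 v = 1 ∧ r = norm2 (M.mulVec v)}

/-- The eigenvalues of `A * Aᵀ` (i.e. the squared singular values of `A`),
sorted in decreasing order. -/
def eigsDesc {n d : ℕ} (A : Matrix (Fin n) (Fin d) ℝ) : Fin n → ℝ := fun i =>
  ((Matrix.isHermitian_mul_conjTranspose_self A).eigenvalues ∘
    Tuple.sort (Matrix.isHermitian_mul_conjTranspose_self A).eigenvalues) i.rev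

/-- The spectral tail `R_k(A) = (σ_k² + (1/k) ∑_{j=k+1}^ρ σ_j²)^{1/2}`. -/
def Rk {n d : ℕ} (A : Matrix (Fin n) (Fin d) ℝ) (k : ℕ) : ℝ :=
  Real.sqrt ((∑ j : Fin n, if (j : ℕ) + 1 = k then eigsDesc A j else 0)
    + (1 / (k : ℝ)) * ∑ j : Fin n, if k ≤ (j : ℕ) then eigsDesc A j else 0)

/-- Product measure on `n × m` matrices with i.i.d. standard Gaussian entries. -/
def gaussMatrix (n m : ℕ) : MeasureTheory.Measure (Fin n → Fin m → ℝ) :=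
  MeasureTheory.Measure.pi fun _ => MeasureTheory.Measure.pi fun _ =>
    ProbabilityTheory.gaussianReal 0 1


/-- The largest eigenvalue (Rayleigh quotient supremum) of a symmetric matrix. -/
def eigMax {q : ℕ} (M : Matrix (Fin q) (Fin q) ℝ) : ℝ :=
  sSup {r | ∃ v : Fin q → ℝ, norm2 v = 1 ∧ r = v ⬝ᵥ M.mulVec v}

/-- The smallest eigenvalue (Rayleigh quotient infimum) of a symmetric matrix. -/
def eigMin {q : ℕ} (M : Matrix (Fin q) (Fin q) ℝ) : ℝ :=
  sInf {r | ∃ v : Fin q → ℝ, norm2 v = 1 ∧ r = v ⬝ᵥ M.mulVec v}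

/-!
First-order optimality of `z` for `f* + ‖B ·‖² / (2λ)` says that `-(1/λ) BᵀB z` is a subgradient
of `f*` at `z`, and by the Fenchel–Young equality a subgradient `s` of `f*` at `z` satisfies
`∇f(s) = z`. So `z*` and `y*` are the gradients of `f` at `-(1/λ) A Aᵀ z*` and
`-(1/λ) A P Aᵀ y*` (using `(P Aᵀ)ᵀ P Aᵀ = A P Aᵀ`). Co-coercivity of the gradient of a convex
`μ`-smooth function, `‖∇f(b) - ∇f(a)‖² / μ ≤ ⟨∇f(b) - ∇f(a), b - a⟩` (Baillon–Haddad, from the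
descent lemma), applied to these two points and multiplied by `λ` is the claimed inequality
after regrouping.
-/

lemma norm2_sq_eq_dotProduct {k : ℕ} (x : Fin k → ℝ) : norm2 x ^ 2 = x ⬝ᵥ x := by
  rw [norm2, Real.sq_sqrt (by positivity)]
  simp [dotProduct, sq]

lemma norm2_smul {k : ℕ} (t : ℝ) (x : Fin k → ℝ) : norm2 (t • x) = |t| * norm2 x := by
  rw [norm2, norm2, ← Real.sqrt_sq_eq_abs, ← Real.sqrt_mul (sq_nonneg t), Finset.mul_sum]
  simp [mul_pow]

lemma norm2_sub_comm {k : ℕ} (x y : Fin k → ℝ) : norm2 (x - y) = norm2 (y - x) := by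
  rw [← neg_sub, ← neg_one_smul ℝ (y - x), norm2_smul]
  simp

lemma dotProduct_le_norm2_mul_norm2 {k : ℕ} (u v : Fin k → ℝ) :
    u ⬝ᵥ v ≤ norm2 u * norm2 v :=
  Real.sum_mul_le_sqrt_mul_sqrt _ _ _

lemma norm2_add_sq {k : ℕ} (x y : Fin k → ℝ) :
    norm2 (x + y) ^ 2 = norm2 x ^ 2 + 2 * (x ⬝ᵥ y) + norm2 y ^ 2 := by
  simp only [norm2_sq_eq_dotProduct, add_dotProduct, dotProduct_add, dotProduct_comm y x]
  ring

section Gradient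

variable {n : ℕ} {f : (Fin n → ℝ) → ℝ} {f' : (Fin n → ℝ) → Fin n → ℝ} {μ : ℝ}

lemma hasDerivAt_comp_lineMap (hdiff : ∀ w, HasFDerivAt f (dotCLM (f' w)) w)
    (a b : Fin n → ℝ) (t : ℝ) :
    HasDerivAt (f ∘ AffineMap.lineMap a b) (f' (AffineMap.lineMap a b t) ⬝ᵥ (b - a)) t :=
  (hdiff _).comp_hasDerivAt t AffineMap.hasDerivAt_lineMap

lemma add_grad_dotProduct_le (hconv : ConvexOn ℝ univ f)
    (hdiff : ∀ w, HasFDerivAt f (dotCLM (f' w)) w) (a b : Fin n → ℝ) :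
    f a + f' a ⬝ᵥ (b - a) ≤ f b := by
  have h := (hconv.comp_affineMap (AffineMap.lineMap a b)).le_slope_of_hasDerivAt
    (mem_univ 0) (mem_univ 1) one_pos (hasDerivAt_comp_lineMap hdiff a b 0)
  simp only [slope_def_field, Function.comp_apply, AffineMap.lineMap_apply_zero,
    AffineMap.lineMap_apply_one, sub_zero, div_one] at h
  linarith

lemma le_add_grad_dotProduct_add_sq (hdiff : ∀ w, HasFDerivAt f (dotCLM (f' w)) w)
    (hsmooth : ∀ w v, norm2 (f' w - f' v) ≤ μ * norm2 (w - v)) (a b : Fin n → ℝ) :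
    f b ≤ f a + f' a ⬝ᵥ (b - a) + μ / 2 * norm2 (b - a) ^ 2 := by
  set u := b - a
  set ψ : ℝ → ℝ := fun t =>
    t * (f' a ⬝ᵥ u) + μ / 2 * t ^ 2 * norm2 u ^ 2 - f (AffineMap.lineMap a b t)
  have hψ : ∀ t, HasDerivAt ψ
      (f' a ⬝ᵥ u + μ * t * norm2 u ^ 2 - f' (AffineMap.lineMap a b t) ⬝ᵥ u) t := by
    intro t
    have := (((hasDerivAt_id t).mul_const (f' a ⬝ᵥ u)).add
      (((hasDerivAt_pow 2 t).const_mul (μ / 2)).mul_const (norm2 u ^ 2))).sub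
      (hasDerivAt_comp_lineMap hdiff a b t)
    refine this.congr_deriv ?_
    simp only [u]
    ring
  have hψ_nonneg : ∀ t ∈ interior (Icc (0 : ℝ) 1),
      0 ≤ f' a ⬝ᵥ u + μ * t * norm2 u ^ 2 - f' (AffineMap.lineMap a b t) ⬝ᵥ u := by
    intro t ht
    rw [interior_Icc] at ht
    have hlip : norm2 (f' (AffineMap.lineMap a b t) - f' a) ≤ μ * (t * norm2 u) := by
      simpa [AffineMap.lineMap_apply, norm2_smul, abs_of_pos ht.1]
        using hsmooth (AffineMap.lineMap a b t) a
    have hcs := dotProduct_le_norm2_mul_norm2 (f' (AffineMap.lineMap a b t) - f' a) u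
    rw [sub_dotProduct] at hcs
    have hN : 0 ≤ norm2 u := Real.sqrt_nonneg _
    have := mul_le_mul_of_nonneg_right hlip hN
    linarith
  have hmono : MonotoneOn ψ (Icc 0 1) :=
    monotoneOn_of_hasDerivWithinAt_nonneg (convex_Icc 0 1)
      (fun t _ => (hψ t).continuousAt.continuousWithinAt)
      (fun t _ => (hψ t).hasDerivWithinAt) hψ_nonneg
  have := hmono (left_mem_Icc.2 zero_le_one) (right_mem_Icc.2 zero_le_one) zero_le_one
  simp only [ψ, AffineMap.lineMap_apply_zero, AffineMap.lineMap_apply_one] at this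
  linarith

lemma add_grad_dotProduct_add_sq_le (hμ : 0 < μ) (hconv : ConvexOn ℝ univ f)
    (hdiff : ∀ w, HasFDerivAt f (dotCLM (f' w)) w)
    (hsmooth : ∀ w v, norm2 (f' w - f' v) ≤ μ * norm2 (w - v)) (a b : Fin n → ℝ) :
    f a + f' a ⬝ᵥ (b - a) + norm2 (f' b - f' a) ^ 2 / (2 * μ) ≤ f b := by
  set g := f' b - f' a
  -- evaluate `f` at the gradient step `b - g / μ`
  have hlow := add_grad_dotProduct_le hconv hdiff a (b - μ⁻¹ • g)
  have hup := le_add_grad_dotProduct_add_sq hdiff hsmooth b (b - μ⁻¹ • g)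
  rw [sub_sub_cancel_left, ← neg_smul, norm2_smul, abs_neg, abs_inv, abs_of_pos hμ,
    dotProduct_smul, smul_eq_mul] at hup
  rw [sub_right_comm, dotProduct_sub, dotProduct_smul, smul_eq_mul] at hlow
  have hgap :
      μ⁻¹ * (f' b ⬝ᵥ g) - μ⁻¹ * (f' a ⬝ᵥ g) - μ / 2 * (μ⁻¹ * norm2 g) ^ 2
        = norm2 g ^ 2 / (2 * μ) := by
    rw [← mul_sub, ← sub_dotProduct, ← norm2_sq_eq_dotProduct]
    field_simp
    ring
  linarith

lemma sq_norm2_grad_sub_div_le (hμ : 0 < μ) (hconv : ConvexOn ℝ univ f)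
    (hdiff : ∀ w, HasFDerivAt f (dotCLM (f' w)) w)
    (hsmooth : ∀ w v, norm2 (f' w - f' v) ≤ μ * norm2 (w - v)) (a b : Fin n → ℝ) :
    norm2 (f' b - f' a) ^ 2 / μ ≤ (f' b - f' a) ⬝ᵥ (b - a) := by
  have hab := add_grad_dotProduct_add_sq_le hμ hconv hdiff hsmooth a b
  have hba := add_grad_dotProduct_add_sq_le hμ hconv hdiff hsmooth b a
  rw [norm2_sub_comm (f' a), ← neg_sub b a, dotProduct_neg] at hba
  rw [sub_dotProduct]
  have : norm2 (f' b - f' a) ^ 2 / μ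
      = norm2 (f' b - f' a) ^ 2 / (2 * μ) + norm2 (f' b - f' a) ^ 2 / (2 * μ) := by
    field_simp
    ring
  linarith

end Gradient

section Fenchel

variable {n : ℕ} {f : (Fin n → ℝ) → ℝ}

lemma le_fenchel {z : Fin n → ℝ} (hz : z ∈ fenchelDom f) (w : Fin n → ℝ) :
    w ⬝ᵥ z - f w ≤ fenchel f z :=
  le_ciSup hz w

lemma dotProduct_smul_add_smul_sub_le {x y : Fin n → ℝ} (hx : x ∈ fenchelDom f)
    (hy : y ∈ fenchelDom f) {a b : ℝ} (ha : 0 ≤ a) (hb : 0 ≤ b) (hab : a + b = 1)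
    (w : Fin n → ℝ) :
    w ⬝ᵥ (a • x + b • y) - f w ≤ a * fenchel f x + b * fenchel f y :=
  calc w ⬝ᵥ (a • x + b • y) - f w = a * (w ⬝ᵥ x - f w) + b * (w ⬝ᵥ y - f w) := by
        rw [dotProduct_add, dotProduct_smul, dotProduct_smul, smul_eq_mul, smul_eq_mul]
        linear_combination (f w) * hab
    _ ≤ a * fenchel f x + b * fenchel f y :=
        add_le_add (mul_le_mul_of_nonneg_left (le_fenchel hx w) ha)
          (mul_le_mul_of_nonneg_left (le_fenchel hy w) hb)

lemma convex_fenchelDom : Convex ℝ (fenchelDom f) :=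
  fun _ hx _ hy _ _ ha hb hab =>
    ⟨_, forall_mem_range.2 (dotProduct_smul_add_smul_sub_le hx hy ha hb hab)⟩

lemma convexOn_fenchel : ConvexOn ℝ (fenchelDom f) (fenchel f) :=
  ⟨convex_fenchelDom, fun _ hx _ hy _ _ ha hb hab =>
    ciSup_le (dotProduct_smul_add_smul_sub_le hx hy ha hb hab)⟩

end Fenchel

open Filter Topology in
lemma sub_two_mul_dotProduct_le_of_isMinOn_add_sq {k l : ℕ} {D : Set (Fin k → ℝ)}
    {g : (Fin k → ℝ) → ℝ} (hg : ConvexOn ℝ D g) (B : Matrix (Fin l) (Fin k) ℝ) (c : ℝ)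
    {z y : Fin k → ℝ} (hz : z ∈ D) (hy : y ∈ D)
    (hmin : IsMinOn (fun x => g x + c * norm2 (B *ᵥ x) ^ 2) D z) :
    g z - 2 * c * (B *ᵥ z ⬝ᵥ B *ᵥ (y - z)) ≤ g y := by
  set X := B *ᵥ z ⬝ᵥ B *ᵥ (y - z)
  set Y := norm2 (B *ᵥ (y - z)) ^ 2
  -- compare `z` with the points `z + t (y - z)` of the segment and let `t → 0⁺`
  have hsegment : ∀ t ∈ Ioo (0 : ℝ) 1, g z ≤ g y + 2 * c * X + t * (c * Y) := by
    intro t ht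
    have hzt : (1 - t) • z + t • y = z + t • (y - z) := by
      rw [smul_sub, sub_smul, one_smul]
      abel
    have hmem := hg.1 hz hy (sub_nonneg.2 ht.2.le) ht.1.le (sub_add_cancel 1 t)
    have hconvex := hg.2 hz hy (sub_nonneg.2 ht.2.le) ht.1.le (sub_add_cancel 1 t)
    rw [hzt] at hmem
    rw [hzt, smul_eq_mul, smul_eq_mul] at hconvex
    have hquad : norm2 (B *ᵥ (z + t • (y - z))) ^ 2
        = norm2 (B *ᵥ z) ^ 2 + 2 * t * X + t ^ 2 * Y := by
      rw [mulVec_add, mulVec_smul, norm2_add_sq, norm2_smul, dotProduct_smul, smul_eq_mul,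
        mul_pow, sq_abs]
      ring
    have hopt := isMinOn_iff.1 hmin _ hmem
    rw [hquad] at hopt
    have : t * g z ≤ t * (g y + 2 * c * X + t * (c * Y)) := by linarith
    exact le_of_mul_le_mul_left this ht.1
  have hlim : Tendsto (fun t : ℝ => g y + 2 * c * X + t * (c * Y)) (𝓝[>] 0)
      (𝓝 (g y + 2 * c * X)) := by
    have : Continuous fun t : ℝ => g y + 2 * c * X + t * (c * Y) := by fun_prop
    simpa using this.continuousWithinAt.tendsto (x := 0) (s := Ioi 0)
  have := ge_of_tendsto hlim (eventually_of_mem (Ioo_mem_nhdsGT one_pos) hsegment)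
  linarith

section Subdifferential

variable {n : ℕ} {f : (Fin n → ℝ) → ℝ}

lemma neg_one_div_smul_mem_fenchelSubdiff {l : ℕ} (B : Matrix (Fin l) (Fin n) ℝ) (lam : ℝ)
    {z : Fin n → ℝ} (hz : z ∈ fenchelDom f)
    (hopt : IsMinOn (fun x => fenchel f x + 1 / (2 * lam) * norm2 (B *ᵥ x) ^ 2)
      (fenchelDom f) z) :
    (-(1 / lam)) • (Bᵀ *ᵥ (B *ᵥ z)) ∈ fenchelSubdiff f z := by
  intro y hy
  have h := sub_two_mul_dotProduct_le_of_isMinOn_add_sq convexOn_fenchel B _ hz hy hopt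
  have hc : 2 * (1 / (2 * lam)) = 1 / lam := by
    rw [one_div, one_div, mul_inv, ← mul_assoc, mul_inv_cancel₀ two_ne_zero, one_mul]
  rw [smul_dotProduct, mulVec_transpose, ← dotProduct_mulVec, smul_eq_mul, ← hc]
  linarith

variable {f' : (Fin n → ℝ) → Fin n → ℝ}

lemma grad_eq_of_mem_fenchelSubdiff (hconv : ConvexOn ℝ univ f)
    (hdiff : ∀ w, HasFDerivAt f (dotCLM (f' w)) w) {z s : Fin n → ℝ}
    (hz : z ∈ fenchelDom f) (hs : s ∈ fenchelSubdiff f z) : f' s = z := by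
  have hmax : ∀ w, w ⬝ᵥ f' s - f w ≤ s ⬝ᵥ f' s - f s := fun w => by
    have := add_grad_dotProduct_le hconv hdiff s w
    rw [dotProduct_sub, dotProduct_comm (f' s) w, dotProduct_comm (f' s) s] at this
    linarith
  have hdom : f' s ∈ fenchelDom f := ⟨_, forall_mem_range.2 hmax⟩
  have hval : fenchel f (f' s) = s ⬝ᵥ f' s - f s :=
    le_antisymm (ciSup_le hmax) (le_fenchel hdom s)
  -- Fenchel–Young equality at `(s, z)`: `z` is a subgradient of `f` at `s`
  have hmin : IsMinOn (fun w => f w - z ⬝ᵥ w) univ s := fun w _ => by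
    have h1 := hs (f' s) hdom
    have h2 := le_fenchel hz w
    rw [hval, dotProduct_sub] at h1
    change f s - z ⬝ᵥ s ≤ f w - z ⬝ᵥ w
    rw [dotProduct_comm z w, dotProduct_comm z s]
    linarith
  have hzero := (hmin.isLocalMin Filter.univ_mem).hasFDerivAt_eq_zero
    ((hdiff s).sub (dotCLM z).hasFDerivAt)
  exact dotProduct_eq _ _ fun u => sub_eq_zero.1 (congrArg (· u) hzero)

end Subdifferential

lemma IsOrthProj.gram_mul_transpose {q m k : ℕ} {S : Matrix (Fin q) (Fin m) ℝ}
    {P : Matrix (Fin q) (Fin q) ℝ} (hP : IsOrthProj S P) (A : Matrix (Fin k) (Fin q) ℝ) :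
    (P * Aᵀ)ᵀ * (P * Aᵀ) = A * P * Aᵀ := by
  rw [transpose_mul, transpose_transpose, hP.1, Matrix.mul_assoc, ← Matrix.mul_assoc P,
    hP.2.1, ← Matrix.mul_assoc]

/-- key dual inequality: with `zs` the dual optimal solution, `ys` the
sketched dual optimal solution and `Δ = ys - zs`, it holds that
`⟨A P_S Aᵀ Δ, Δ⟩ + (λ/μ) ‖Δ‖₂² ≤ ⟨A P_S^⊥ Aᵀ zs, Δ⟩`. -/
theorem statement_4 {n d m : ℕ} (f : (Fin n → ℝ) → ℝ) (f' : (Fin n → ℝ) → Fin n → ℝ)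
    (A : Matrix (Fin n) (Fin d) ℝ) (μ lam : ℝ)
    (hμ : 0 < μ) (hlam : 0 < lam)
    (hconv : ConvexOn ℝ Set.univ f)
    (hdiff : ∀ w, HasFDerivAt f (dotCLM (f' w)) w)
    (hsmooth : ∀ w v, norm2 (f' w - f' v) ≤ μ * norm2 (w - v))
    (S : Matrix (Fin d) (Fin m) ℝ) (P : Matrix (Fin d) (Fin d) ℝ)
    (hP : IsOrthProj S P)
    (zs : Fin n → ℝ) (hzsdom : zs ∈ fenchelDom f)
    (hzs : ∀ z ∈ fenchelDom f,
      fenchel f zs + 1 / (2 * lam) * norm2 (Aᵀ.mulVec zs) ^ 2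
        ≤ fenchel f z + 1 / (2 * lam) * norm2 (Aᵀ.mulVec z) ^ 2)
    (ys : Fin n → ℝ) (hysdom : ys ∈ fenchelDom f)
    (hys : ∀ y ∈ fenchelDom f,
      fenchel f ys + 1 / (2 * lam) * norm2 ((P * Aᵀ).mulVec ys) ^ 2
        ≤ fenchel f y + 1 / (2 * lam) * norm2 ((P * Aᵀ).mulVec y) ^ 2) :
    (A * P * Aᵀ).mulVec (ys - zs) ⬝ᵥ (ys - zs) + lam / μ * norm2 (ys - zs) ^ 2
      ≤ (A * (1 - P) * Aᵀ).mulVec zs ⬝ᵥ (ys - zs) := by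
  have hgrad_zs := grad_eq_of_mem_fenchelSubdiff hconv hdiff hzsdom
    (neg_one_div_smul_mem_fenchelSubdiff Aᵀ lam hzsdom (isMinOn_iff.2 hzs))
  have hgrad_ys := grad_eq_of_mem_fenchelSubdiff hconv hdiff hysdom
    (neg_one_div_smul_mem_fenchelSubdiff (P * Aᵀ) lam hysdom (isMinOn_iff.2 hys))
  have hcoco := sq_norm2_grad_sub_div_le hμ hconv hdiff hsmooth
    ((-(1 / lam)) • (Aᵀᵀ *ᵥ (Aᵀ *ᵥ zs)))
    ((-(1 / lam)) • ((P * Aᵀ)ᵀ *ᵥ ((P * Aᵀ) *ᵥ ys)))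
  rw [hgrad_zs, hgrad_ys, mulVec_mulVec, mulVec_mulVec, transpose_transpose,
    hP.gram_mul_transpose, ← smul_sub, dotProduct_smul, smul_eq_mul, dotProduct_sub] at hcoco
  have hscaled := mul_le_mul_of_nonneg_left hcoco hlam.le
  rw [mul_div_assoc', ← mul_assoc, mul_neg, mul_one_div_cancel hlam.ne', neg_one_mul, neg_sub,
    ← div_mul_eq_mul_div, dotProduct_comm (ys - zs), dotProduct_comm (ys - zs)] at hscaled
  rw [Matrix.mul_sub, Matrix.mul_one, Matrix.sub_mul, sub_mulVec, sub_dotProduct, mulVec_sub,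
    sub_dotProduct]
  linarith

end Sketch
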